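/- arXiv:1607.06705 — 2 statements merged into one kernel-verified Lean document; each statement's English description precedes it below -/
import Mathlib

section
/- Let R be an integral domain, ★ a star operation on R, and let J = (a₁, …, a_k) be a finitely generated nonzero fractional ideal contained in a nonzero fractional ideal I. Then J is a ★-reduction of I if and only if, for every positive integer n, the ideal (a₁^n, …, a_k^n) is a ★-reduction of I^n. -/
/-!
The `n`-th powers of the generators need not generate `J ^ n`, but by pigeonhole every monomial
of degree `k * n` in `a₁, …, a_k` has some `aᵢ` to the power at least `n`, so
`J ^ (k n) ≤ (a₁ⁿ, …, a_kⁿ) · J ^ (k n - n)`. A `★`-reduction `(J I ^ m)^★ = (I ^ (m + 1))^★`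
propagates, by `(A^★ B)^★ = (A B)^★`, to `(J ^ t I ^ p)^★ = (I ^ (t + p))^★` for all `p ≥ m`;
with the pigeonhole inclusion this gives `((I ^ n) ^ (e + 1))^★ ≤ ((a₁ⁿ, …, a_kⁿ) (I ^ n) ^ e)^★`
for large `e`, and the reverse inclusion is monotonicity. The converse is the case `n = 1`.
-/

open scoped nonZeroDivisors

/-- A star operation on a domain `R` with fraction field `K`: a map on (nonzero) fractional
ideals satisfying `(xR)^★ = xR`, `(xI)^★ = x I^★`, `I ⊆ I^★`, monotonicity, and idempotency. -/
structure StarOperation (R K : Type*) [CommRing R] [IsDomain R] [Field K] [Algebra R K]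
    [IsFractionRing R K] where
  star : FractionalIdeal R⁰ K → FractionalIdeal R⁰ K
  star_spanSingleton : ∀ x : K, x ≠ 0 →
    star (FractionalIdeal.spanSingleton R⁰ x) = FractionalIdeal.spanSingleton R⁰ x
  star_spanSingleton_mul : ∀ (x : K) (I : FractionalIdeal R⁰ K), x ≠ 0 → I ≠ 0 →
    star (FractionalIdeal.spanSingleton R⁰ x * I) = FractionalIdeal.spanSingleton R⁰ x * star I
  le_star : ∀ I : FractionalIdeal R⁰ K, I ≠ 0 → I ≤ star I
  star_mono : ∀ I J : FractionalIdeal R⁰ K, I ≠ 0 → I ≤ J → star I ≤ star J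
  star_star : ∀ I : FractionalIdeal R⁰ K, I ≠ 0 → star (star I) = star I

/-- `J` is a `★`-reduction of `I` if `(J · I^n)^★ = (I^(n+1))^★` for some integer `n ≥ 0`. -/
def IsStarReduction {R K : Type*} [CommRing R] [IsDomain R] [Field K] [Algebra R K]
    [IsFractionRing R K] (s : StarOperation R K) (J I : FractionalIdeal R⁰ K) : Prop :=
  ∃ n : ℕ, s.star (J * I ^ n) = s.star (I ^ (n + 1))

namespace Finset

variable {α ι : Type*}

theorem sum_le_of_forall_le [IdemSemiring α] {s : Finset ι} {f : ι → α} {a : α}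
    (h : ∀ i ∈ s, f i ≤ a) : ∑ i ∈ s, f i ≤ a :=
  sum_induction f (· ≤ a) (fun _ _ => add_le) zero_le h

variable [IdemCommSemiring α] [Fintype ι]

theorem prod_comp_le_pow_mul_pow_sum [DecidableEq ι] (f : ι → α) {N n : ℕ} (p : Fin N → ι)
    (i : ι) (hi : n ≤ #{j | p j = i}) : ∏ j, f (p j) ≤ f i ^ n * (∑ i, f i) ^ (N - n) := by
  set c := #{j | p j = i}
  have hcN : c ≤ N := (card_filter_le _ _).trans_eq (card_fin N)
  have hfiber : ∏ j with p j = i, f (p j) = f i ^ c := by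
    rw [prod_congr rfl fun j hj => by rw [(mem_filter.1 hj).2], prod_const]
  have hrest : ∏ j with ¬p j = i, f (p j) ≤ (∑ i, f i) ^ (N - c) := by
    have hcard : #{j | ¬p j = i} = N - c := by
      have := card_filter_add_card_filter_not (s := univ) (fun j => p j = i)
      rw [card_univ, Fintype.card_fin] at this
      omega
    rw [← hcard]
    exact prod_le_pow_card _ _ _ fun j _ => single_le_sum (fun _ _ => zero_le) (mem_univ _)
  rw [← prod_filter_mul_prod_filter_not univ (fun j => p j = i), hfiber]
  calc f i ^ c * ∏ j with ¬p j = i, f (p j)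
      ≤ f i ^ n * f i ^ (c - n) * (∑ i, f i) ^ (N - c) := by
        rw [← pow_add, Nat.add_sub_cancel' hi]; exact mul_le_mul_right hrest _
    _ ≤ f i ^ n * (∑ i, f i) ^ (c - n) * (∑ i, f i) ^ (N - c) := by
        gcongr; exact single_le_sum (fun _ _ => zero_le) (mem_univ i)
    _ = f i ^ n * (∑ i, f i) ^ (N - n) := by
        rw [mul_assoc, ← pow_add]; congr 2; omega

/-- Pigeonhole: a monomial of degree `N > |ι| (n - 1)` has some variable to a power `≥ n`. -/
theorem pow_sum_le_sum_pow_mul_pow_sum (f : ι → α) {n N : ℕ}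
    (hN : Fintype.card ι * (n - 1) < N) :
    (∑ i, f i) ^ N ≤ (∑ i, f i ^ n) * (∑ i, f i) ^ (N - n) := by
  classical
  rw [Fintype.sum_pow]
  refine sum_le_of_forall_le fun p _ => ?_
  obtain ⟨i, hi⟩ := Fintype.exists_lt_card_fiber_of_mul_lt_card p (by simpa using hN)
  exact (prod_comp_le_pow_mul_pow_sum f p i (by omega)).trans <|
    mul_le_mul_left (single_le_sum (f := fun i => f i ^ n) (fun _ _ => zero_le) (mem_univ i)) _

end Finset

namespace FractionalIdeal

variable {R : Type*} [CommRing R] {S : Submonoid R} {P : Type*} [CommRing P] [Algebra R P]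

/-- Not an instance, so that sums of fractional ideals keep elaborating to the usual terms. -/
abbrev idemCommSemiring : IdemCommSemiring (FractionalIdeal S P) :=
  { commSemiring, lattice, orderBot with add_eq_sup := fun I J => (sup_eq_add I J).symm }

instance [NoZeroDivisors P] : NoZeroDivisors (FractionalIdeal S P) where
  eq_zero_or_eq_zero_of_mul_eq_zero {A B} hAB := by
    simp only [eq_zero_iff] at hAB ⊢
    by_contra! h
    obtain ⟨⟨x, hx, hx0⟩, ⟨y, hy, hy0⟩⟩ := h
    exact mul_ne_zero hx0 hy0 (hAB _ (mul_mem_mul hx hy))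

end FractionalIdeal

namespace StarOperation

open FractionalIdeal

variable {R K : Type*} [CommRing R] [IsDomain R] [Field K] [Algebra R K] [IsFractionRing R K]
  (s : StarOperation R K) {A B C I J : FractionalIdeal R⁰ K}

theorem star_mul_le_star_mul (hA : A ≠ 0) : s.star A * B ≤ s.star (A * B) := by
  rw [FractionalIdeal.mul_le]
  intro x hx y hy
  rcases eq_or_ne y 0 with rfl | hy0
  · rw [mul_zero]; exact zero_mem _
  · have hyA : spanSingleton R⁰ y * A ≤ A * B := by
      rw [mul_comm A]; exact mul_le_mul_left (spanSingleton_le_iff_mem.2 hy) A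
    have hstar := s.star_mono _ _ (mul_ne_zero (spanSingleton_ne_zero_iff.2 hy0) hA) hyA
    rw [s.star_spanSingleton_mul y A hy0 hA] at hstar
    rw [mul_comm x y]
    exact hstar (mul_mem_mul (mem_spanSingleton_self R⁰ y) hx)

theorem star_star_mul (hA : A ≠ 0) (hB : B ≠ 0) : s.star (s.star A * B) = s.star (A * B) := by
  have hAB : A * B ≠ 0 := mul_ne_zero hA hB
  have hle : A * B ≤ s.star A * B := mul_le_mul_left (s.le_star A hA) B
  refine le_antisymm ?_ (s.star_mono _ _ hAB hle)
  calc s.star (s.star A * B) ≤ s.star (s.star (A * B)) :=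
        s.star_mono _ _ (ne_bot_of_le_ne_bot hAB hle) (s.star_mul_le_star_mul hA)
    _ = s.star (A * B) := s.star_star _ hAB

theorem star_mul_congr (hA : A ≠ 0) (hB : B ≠ 0) (hC : C ≠ 0) (h : s.star A = s.star B) :
    s.star (A * C) = s.star (B * C) := by
  rw [← s.star_star_mul hA hC, h, s.star_star_mul hB hC]

theorem star_pow_mul_pow_eq (hJ : J ≠ 0) (hI : I ≠ 0) {m : ℕ}
    (hm : s.star (J * I ^ m) = s.star (I ^ (m + 1))) (t : ℕ) {p : ℕ} (hp : m ≤ p) :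
    s.star (J ^ t * I ^ p) = s.star (I ^ (t + p)) := by
  induction t generalizing p with
  | zero => rw [pow_zero, one_mul, zero_add]
  | succ t ih =>
    have hshift : s.star (J * I ^ p) = s.star (I ^ (p + 1)) := by
      obtain ⟨d, rfl⟩ := Nat.exists_eq_add_of_le hp
      have := s.star_mul_congr (mul_ne_zero hJ (pow_ne_zero m hI)) (pow_ne_zero _ hI)
        (pow_ne_zero d hI) hm
      rwa [mul_assoc, ← pow_add, ← pow_add, add_right_comm] at this
    calc s.star (J ^ (t + 1) * I ^ p) = s.star (J * I ^ p * J ^ t) := by ring_nf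
      _ = s.star (I ^ (p + 1) * J ^ t) :=
        s.star_mul_congr (mul_ne_zero hJ (pow_ne_zero p hI)) (pow_ne_zero _ hI)
          (pow_ne_zero t hJ) hshift
      _ = s.star (I ^ (t + 1 + p)) := by
        rw [mul_comm, ih (hp.trans p.le_succ), add_right_comm, add_assoc]

end StarOperation

theorem IsStarReduction.pow_of_pow_le_mul {R K : Type*} [CommRing R] [IsDomain R] [Field K]
    [Algebra R K] [IsFractionRing R K] {s : StarOperation R K} {J J' I : FractionalIdeal R⁰ K}
    (hJ : J ≠ 0) (hI : I ≠ 0) (hJI : J ≤ I) (hred : IsStarReduction s J I) {n N : ℕ}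
    (hn : 0 < n) (hnN : n ≤ N) (hJ'I : J' ≤ I ^ n) (hpow : J ^ N ≤ J' * J ^ (N - n)) :
    IsStarReduction s J' (I ^ n) := by
  obtain ⟨m, hm⟩ := hred
  have hJ' : J' ≠ 0 := by
    rintro rfl
    exact pow_ne_zero N hJ (le_antisymm (by simpa using hpow) zero_le)
  have hle : N + m ≤ n * (N + m) := Nat.le_mul_of_pos_left _ hn
  -- for `e := N + m`: `(I ^ n) ^ e = I ^ (N - n + p)`, `(I ^ n) ^ (e + 1) = I ^ (N + p)`, `m ≤ p`
  set p := n * (N + m) + n - N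
  have hexp : (I ^ n) ^ (N + m) = I ^ (N - n + p) := by rw [← pow_mul]; congr 1; omega
  refine ⟨N + m, le_antisymm ?_ ?_⟩
  · refine s.star_mono _ _ (mul_ne_zero hJ' (pow_ne_zero _ (pow_ne_zero n hI))) ?_
    rw [pow_succ' (I ^ n)]
    exact mul_le_mul_left hJ'I _
  · calc s.star ((I ^ n) ^ (N + m + 1)) = s.star (J ^ N * I ^ p) := by
          rw [s.star_pow_mul_pow_eq hJ hI hm N (by omega), ← pow_mul, mul_add_one]
          congr 2; omega
      _ ≤ s.star (J' * (I ^ n) ^ (N + m)) := by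
          refine s.star_mono _ _ (mul_ne_zero (pow_ne_zero N hJ) (pow_ne_zero p hI)) ?_
          calc J ^ N * I ^ p ≤ J' * I ^ (N - n) * I ^ p := by
                gcongr; exact hpow.trans (mul_le_mul_right (pow_le_pow_left' hJI _) _)
            _ = J' * (I ^ n) ^ (N + m) := by rw [hexp, pow_add, mul_assoc]

/-- For `J = (a₁, …, a_k)` a finitely generated nonzero fractional ideal contained in `I`:
`J` is a `★`-reduction of `I` iff for every positive `n` the ideal `(a₁^n, …, a_k^n)` is a
`★`-reduction of `I^n`. -/
theorem starReduction_iff_pow_generators (R K : Type*) [CommRing R] [IsDomain R] [Field K]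
    [Algebra R K] [IsFractionRing R K] (s : StarOperation R K) (k : ℕ) (a : Fin k → K)
    (J I : FractionalIdeal R⁰ K)
    (hJ : J = ∑ i : Fin k, FractionalIdeal.spanSingleton R⁰ (a i))
    (hJ0 : J ≠ 0) (hI0 : I ≠ 0) (hJI : J ≤ I) :
    IsStarReduction s J I ↔ ∀ n : ℕ, 0 < n →
      IsStarReduction s (∑ i : Fin k, FractionalIdeal.spanSingleton R⁰ (a i ^ n)) (I ^ n) := by
  let := FractionalIdeal.idemCommSemiring (S := R⁰) (P := K)
  simp only [← FractionalIdeal.spanSingleton_pow]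
  refine ⟨fun hred n hn => ?_, fun h => by simpa [← hJ] using h 1 one_pos⟩
  have hk : 0 < k := Nat.pos_of_ne_zero <| by rintro rfl; simp [hJ] at hJ0
  have hpow := Finset.pow_sum_le_sum_pow_mul_pow_sum
    (fun i => FractionalIdeal.spanSingleton R⁰ (a i)) (n := n) (N := k * n)
    (by simpa using Nat.mul_lt_mul_of_pos_left (by omega : n - 1 < n) hk)
  rw [← hJ] at hpow
  refine hred.pow_of_pow_le_mul hJ0 hI0 hJI hn (Nat.le_mul_of_pos_left n hk) ?_ hpow
  refine Finset.sum_le_of_forall_le fun i _ => pow_le_pow_left' (le_trans ?_ hJI) n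
  rw [hJ]
  exact Finset.single_le_sum (f := fun i => FractionalIdeal.spanSingleton R⁰ (a i))
    (fun _ _ => zero_le) (Finset.mem_univ i)
end

section
/- Let R be a domain with the finite t-basic ideal property. Then every nonzero finitely generated ideal of R is v-basic: if I is a nonzero finitely generated ideal and J ⊆ I with (J·I^n)_v = (I^(n+1))_v for some n ≥ 0, then J_v = I_v. -/
open scoped nonZeroDivisors

/-- The `v`-operation (divisorial closure) on `R`-submodules of the fraction field `K`:
`I_v = (I⁻¹)⁻¹` where `I⁻¹ = (R : I) = 1 / I`. -/
noncomputable def vS (R K : Type*) [CommRing R] [Field K] [Algebra R K]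
    (I : Submodule R K) : Submodule R K := 1 / (1 / I)

/-- The `t`-operation: `I_t = ⋃ J_v` where `J` ranges over nonzero finitely generated
sub-ideals of `I`. -/
noncomputable def tS (R K : Type*) [CommRing R] [Field K] [Algebra R K]
    (I : Submodule R K) : Submodule R K :=
  ⨆ J ∈ {J : Submodule R K | J ≠ ⊥ ∧ J.FG ∧ J ≤ I}, vS R K J

/-- The image of an ideal of `R` in the fraction field `K`, as an `R`-submodule. -/
noncomputable def idealToSub (R K : Type*) [CommRing R] [Field K] [Algebra R K]
    (I : Ideal R) : Submodule R K := Submodule.map (Algebra.linearMap R K) I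

/-- The `t`-closure of an ideal of `R`, computed in the fraction field `K`. -/
noncomputable def tI (R K : Type*) [CommRing R] [Field K] [Algebra R K]
    (I : Ideal R) : Submodule R K := tS R K (idealToSub R K I)

/-- The `v`-closure of an ideal of `R`, computed in the fraction field `K`. -/
noncomputable def vI (R K : Type*) [CommRing R] [Field K] [Algebra R K]
    (I : Ideal R) : Submodule R K := vS R K (idealToSub R K I)

/-!
Let `y ∈ J⁻¹` and write `y = q / p` with `p, q ∈ R`. Since `Iⁿ⁺¹ ⊆ (J Iⁿ)_v`, we get
`y Iⁿ⁺¹ ⊆ (Iⁿ)_v`, hence `(qI)ⁿ⁺¹ = p (qI)ⁿ · y Iⁿ⁺¹ ⊆ (p (qI)ⁿ)_v`, so `(p)` is a `v`-reduction of the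
finitely generated ideal `E = (p) + qI`. On finitely generated ideals `t = v`, so the `t`-basic
property of `E` gives `E_v = (p)_v = (p)`. Thus `qI ⊆ (p)`, i.e. `y ∈ I⁻¹`; so `J⁻¹ = I⁻¹`
and `J_v = I_v`.
-/

open Submodule

theorem add_pow_succ_le_mul_add_pow {α : Type*} [IdemCommSemiring α] (a b : α) (n : ℕ) :
    (a + b) ^ (n + 1) ≤ a * (a + b) ^ n + b ^ (n + 1) := by
  induction n with
  | zero => simp
  | succ n ih =>
    have hb : b ^ (n + 1) * a ≤ a * (a + b) ^ (n + 1) := by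
      rw [mul_comm]
      exact mul_le_mul_right (pow_le_pow_left' le_add_self _) a
    calc (a + b) ^ (n + 1 + 1) = (a + b) ^ (n + 1) * (a + b) := pow_succ _ _
      _ ≤ (a * (a + b) ^ n + b ^ (n + 1)) * (a + b) := mul_le_mul_left ih _
      _ = a * (a + b) ^ (n + 1) + b ^ (n + 1) * a + b ^ (n + 1 + 1) := by ring
      _ ≤ a * (a + b) ^ (n + 1) + b ^ (n + 1 + 1) := add_le_add (add_le le_rfl hb) le_rfl

section VOperation

variable {R K : Type*} [CommRing R] [Field K] [Algebra R K]

lemma one_div_antitone : Antitone fun X : Submodule R K => 1 / X :=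
  fun _ _ h _ hz w hw => hz w (h hw)

lemma le_vS (X : Submodule R K) : X ≤ vS R K X :=
  Submodule.le_div_iff_mul_le.2 mul_one_div_le_one

lemma vS_mono {X Y : Submodule R K} (h : X ≤ Y) : vS R K X ≤ vS R K Y :=
  one_div_antitone (one_div_antitone h)

lemma vS_vS (X : Submodule R K) : vS R K (vS R K X) = vS R K X :=
  le_antisymm (one_div_antitone (le_vS _)) (le_vS _)

lemma vS_eq_vS_of_le_of_le_vS {X Y : Submodule R K} (hXY : X ≤ Y) (hYX : Y ≤ vS R K X) :
    vS R K X = vS R K Y :=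
  le_antisymm (vS_mono hXY) (vS_vS X ▸ vS_mono hYX)

lemma mul_vS_le (A B : Submodule R K) : A * vS R K B ≤ vS R K (A * B) := by
  have hA : A * (1 / (A * B)) ≤ 1 / B := by
    rw [Submodule.le_div_iff_mul_le, mul_right_comm]
    exact mul_one_div_le_one
  refine Submodule.le_div_iff_mul_le.2 ?_
  calc A * vS R K B * (1 / (A * B)) = vS R K B * (A * (1 / (A * B))) := by ring
    _ ≤ vS R K B * (1 / B) := mul_le_mul_right hA _
    _ ≤ 1 := Submodule.le_div_iff_mul_le.1 le_rfl

lemma mul_vS_mul_le_vS {A J : Submodule R K} (hAJ : A * J ≤ 1) (X : Submodule R K) :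
    A * vS R K (J * X) ≤ vS R K X :=
  calc A * vS R K (J * X) ≤ vS R K (A * J * X) := mul_assoc A J X ▸ mul_vS_le _ _
    _ ≤ vS R K (1 * X) := vS_mono (mul_le_mul_left hAJ X)
    _ = vS R K X := by rw [one_mul]

lemma vS_span_singleton {c : K} (hc : c ≠ 0) : vS R K (span R {c}) = span R {c} := by
  refine le_antisymm (fun w hw => ?_) (le_vS _)
  have hinv : c⁻¹ ∈ 1 / span R {c} := mem_div_iff_forall_mul_mem.2 fun u hu => by
    obtain ⟨r, rfl⟩ := mem_span_singleton.1 hu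
    rw [mul_smul_comm, inv_mul_cancel₀ hc]
    exact smul_mem _ r (one_le.1 le_rfl)
  obtain ⟨r, hr⟩ := mem_one.1 (hw _ hinv)
  exact mem_span_singleton.2 ⟨r, by rw [Algebra.smul_def, hr, inv_mul_cancel_right₀ hc]⟩

lemma tS_eq_vS {X : Submodule R K} (hX : X ≠ ⊥) (hfg : X.FG) : tS R K X = vS R K X :=
  le_antisymm (iSup₂_le fun _ hY => vS_mono hY.2.2) (le_iSup₂_of_le X ⟨hX, hfg, le_rfl⟩ le_rfl)

lemma vS_mul_sup_pow_eq {P B : Submodule R K} {n : ℕ} (h : B ^ (n + 1) ≤ vS R K (P * B ^ n)) :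
    vS R K (P * (P ⊔ B) ^ n) = vS R K ((P ⊔ B) ^ (n + 1)) := by
  rw [← Submodule.add_eq_sup]
  refine vS_eq_vS_of_le_of_le_vS ?_
    ((add_pow_succ_le_mul_add_pow P B n).trans (add_le (le_vS _) ?_))
  · rw [pow_succ']
    exact mul_le_mul_left le_self_add _
  · exact h.trans (vS_mono (mul_le_mul_right (pow_le_pow_left' le_add_self n) P))

lemma span_singleton_mul_pow (c : K) (I : Submodule R K) (n : ℕ) :
    (span R {c} * I) ^ n = span R {c ^ n} * I ^ n := by
  rw [mul_pow, span_pow, Set.singleton_pow]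

lemma pow_le_vS_of_mem_one_div {I J : Submodule R K} {n : ℕ} {y : K} (hy : y ∈ 1 / J)
    (hred : vS R K (J * I ^ n) = vS R K (I ^ (n + 1))) (p : K) :
    (span R {y * p} * I) ^ (n + 1) ≤ vS R K (span R {p} * (span R {y * p} * I) ^ n) := by
  have hyI : span R {y} * I ^ (n + 1) ≤ vS R K (I ^ n) :=
    calc span R {y} * I ^ (n + 1) ≤ span R {y} * vS R K (J * I ^ n) :=
          mul_le_mul_right (hred ▸ le_vS _) _
      _ ≤ vS R K (I ^ n) := mul_vS_mul_le_vS
          (Submodule.le_div_iff_mul_le.1 ((span_singleton_le_iff_mem _ _).2 hy)) _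
  have hsplit : span R {(y * p) ^ (n + 1)} = span R {p * (y * p) ^ n} * span R {y} := by
    rw [span_mul_span, Set.singleton_mul_singleton]
    ring_nf
  calc (span R {y * p} * I) ^ (n + 1)
      = span R {p * (y * p) ^ n} * (span R {y} * I ^ (n + 1)) := by
        rw [span_singleton_mul_pow, hsplit, mul_assoc]
    _ ≤ span R {p * (y * p) ^ n} * vS R K (I ^ n) := mul_le_mul_right hyI _
    _ ≤ vS R K (span R {p * (y * p) ^ n} * I ^ n) := mul_vS_le _ _
    _ = vS R K (span R {p} * (span R {y * p} * I) ^ n) := by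
        rw [span_singleton_mul_pow, ← mul_assoc, span_mul_span, Set.singleton_mul_singleton]

lemma mem_one_div_of_vS_span_singleton_eq {I : Submodule R K} {y p : K} (hp : p ≠ 0)
    (h : vS R K (span R {p}) = vS R K (span R {p} ⊔ span R {y * p} * I)) : y ∈ 1 / I := by
  have hle : span R {y * p} * I ≤ span R {p} :=
    calc span R {y * p} * I ≤ span R {p} ⊔ span R {y * p} * I := le_sup_right
      _ ≤ vS R K (span R {p}) := h ▸ le_vS _
      _ = span R {p} := vS_span_singleton hp
  refine mem_div_iff_forall_mul_mem.2 fun x hx => ?_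
  obtain ⟨r, hr⟩ := mem_span_singleton.1 (hle (mul_mem_mul (mem_span_singleton_self _) hx))
  exact mem_one.2 ⟨r, mul_right_cancel₀ hp (by rw [← Algebra.smul_def, hr]; ring)⟩

end VOperation

section IdealToSub

open IsLocalization

variable {R K : Type*} [CommRing R] [Field K] [Algebra R K]

lemma idealToSub_mul (A B : Ideal R) :
    idealToSub R K (A * B) = idealToSub R K A * idealToSub R K B :=
  coeSubmodule_mul K A B

lemma idealToSub_pow (A : Ideal R) (n : ℕ) : idealToSub R K (A ^ n) = idealToSub R K A ^ n :=
  Submodule.map_pow A (Algebra.ofId R K) n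

lemma idealToSub_sup (A B : Ideal R) :
    idealToSub R K (A ⊔ B) = idealToSub R K A ⊔ idealToSub R K B :=
  coeSubmodule_sup K A B

lemma idealToSub_span_singleton (x : R) :
    idealToSub R K (Ideal.span {x}) = span R {algebraMap R K x} :=
  coeSubmodule_span_singleton K x

variable [IsFractionRing R K]

lemma idealToSub_ne_bot {A : Ideal R} (hA : A ≠ 0) : idealToSub R K A ≠ ⊥ := fun h =>
  hA (IsFractionRing.coeSubmodule_injective R K (h.trans (coeSubmodule_bot K).symm))

lemma tI_eq_vI {A : Ideal R} (hA : A ≠ 0) (hfg : A.FG) : tI R K A = vI R K A :=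
  tS_eq_vS (idealToSub_ne_bot hA) (Submodule.FG.map _ hfg)

variable [IsDomain R]

lemma vI_eq_vI_of_tBasic {E P : Ideal R}
    (hbasic : ∀ J : Ideal R, J ≠ 0 → J ≤ E →
      (∃ n : ℕ, tI R K (J * E ^ n) = tI R K (E ^ (n + 1))) → tI R K J = tI R K E)
    (hE : E ≠ 0) (hEfg : E.FG) (hP : P ≠ 0) (hPfg : P.FG) (hPE : P ≤ E) {n : ℕ}
    (hred : vI R K (P * E ^ n) = vI R K (E ^ (n + 1))) : vI R K P = vI R K E := by
  rw [← tI_eq_vI hP hPfg, ← tI_eq_vI hE hEfg]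
  refine hbasic P hP hPE ⟨n, ?_⟩
  rwa [tI_eq_vI (mul_ne_zero hP (pow_ne_zero n hE)) (hPfg.mul hEfg.pow),
    tI_eq_vI (pow_ne_zero _ hE) hEfg.pow]

end IdealToSub

theorem v_basic_of_finite_t_basic_general (R K : Type*) [CommRing R] [IsDomain R]
    [Field K] [Algebra R K] [IsFractionRing R K]
    (hbasic : ∀ I : Ideal R, I ≠ 0 → I.FG → ∀ J : Ideal R, J ≠ 0 → J ≤ I →
      (∃ n : ℕ, tI R K (J * I ^ n) = tI R K (I ^ (n + 1))) → tI R K J = tI R K I)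
    (I : Ideal R) (hIfg : I.FG) (J : Ideal R) (hJI : J ≤ I)
    (hred : ∃ n : ℕ, vI R K (J * I ^ n) = vI R K (I ^ (n + 1))) :
    vI R K J = vI R K I := by
  obtain ⟨n, hn⟩ := hred
  rw [vI, vI, idealToSub_mul, idealToSub_pow, idealToSub_pow] at hn
  refine le_antisymm (vS_mono (Submodule.map_mono hJI)) (one_div_antitone fun y hy => ?_)
  obtain ⟨q, p, hp, rfl⟩ := IsFractionRing.div_surjective (A := R) y
  have hp0 : algebraMap R K p ≠ 0 := IsFractionRing.to_map_ne_zero_of_mem_nonZeroDivisors hp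
  have hP0 : Ideal.span {p} ≠ 0 := by
    simpa [Ideal.span_singleton_eq_bot] using nonZeroDivisors.ne_zero hp
  set E := Ideal.span {p} ⊔ Ideal.span {q} * I
  have hE : idealToSub R K E = span R {algebraMap R K p} ⊔
      span R {algebraMap R K q / algebraMap R K p * algebraMap R K p} * idealToSub R K I := by
    rw [div_mul_cancel₀ _ hp0, idealToSub_sup, idealToSub_mul, idealToSub_span_singleton,
      idealToSub_span_singleton]
  have hE0 : E ≠ 0 := ne_bot_of_le_ne_bot hP0 le_sup_left
  have hEfg : E.FG :=
    (Submodule.fg_span_singleton p).sup ((Submodule.fg_span_singleton q).mul hIfg)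
  have hv := vI_eq_vI_of_tBasic (hbasic E hE0 hEfg) hE0 hEfg hP0 (Submodule.fg_span_singleton p)
    le_sup_left (n := n) (by
      rw [vI, vI, idealToSub_mul, idealToSub_pow, idealToSub_pow, hE, idealToSub_span_singleton]
      exact vS_mul_sup_pow_eq (pow_le_vS_of_mem_one_div hy hn _))
  rw [vI, vI, hE, idealToSub_span_singleton] at hv
  exact mem_one_div_of_vS_span_singleton_eq hp0 hv

/-- If `R` has the finite `t`-basic ideal property, then every nonzero finitely generated
ideal of `R` is `v`-basic. -/
theorem v_basic_of_finite_t_basic (R K : Type*) [CommRing R] [IsDomain R]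
    [Field K] [Algebra R K] [IsFractionRing R K]
    (hbasic : ∀ I : Ideal R, I ≠ 0 → I.FG → ∀ J : Ideal R, J ≠ 0 → J ≤ I →
      (∃ n : ℕ, tI R K (J * I ^ n) = tI R K (I ^ (n + 1))) → tI R K J = tI R K I)
    (I : Ideal R) (hI0 : I ≠ 0) (hIfg : I.FG) (J : Ideal R) (hJ0 : J ≠ 0) (hJI : J ≤ I)
    (hred : ∃ n : ℕ, vI R K (J * I ^ n) = vI R K (I ^ (n + 1))) :
    vI R K J = vI R K I :=
  v_basic_of_finite_t_basic_general R K hbasic I hIfg J hJI hred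
end
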